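/- Let p be an odd prime, m a positive integer, n = 2m, and q = p^n. Let δ ∈ F_q be such that either Tr_m^{2m}(δ) = 0, or Tr_m^{2m}(δ) ≠ 0 and (Tr_m^{2m}(δ) − 1)/Tr_m^{2m}(δ) = γ^{p−1} for some γ in the subfield F_{p^m}. Define F : F_q → F_q by F(x) = (x^{p^m} − x + δ)^{p^{m+1} + 1} + x. Then for every c in the subfield F_{p^m} of F_q with c ≠ 1 (i.e., c^{p^m} = c and c ≠ 1), F is PcN: for all a, b ∈ F_q the equation F(x+a) − c·F(x) = b has exactly one solution x ∈ F_q. -/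

import Mathlib

/-!
Write `σ x = x ^ p ^ m`, an involution of `F`, `T = δ + σ δ` and `L x = σ x - x + δ`, so that
`σ (L x) = T - L x` and the map is `G x = (σ (L x)) ^ p * L x + x`. Applying `σ` to
`Φ x = G (x + a) - c G x` cancels the terms of degree `p + 1` in `L x`: since `σ c = c`,
`σ (Φ x) - Φ x = (1 - c) Λ (L x) + const` with the additive map `Λ w = T w ^ p - T ^ p w + w`.
Hence `Φ x = Φ y` gives `Λ w = 0` for `w = L x - L y`, where `σ w = -w`. The condition on `T` turns
`Λ w = 0` into `w ^ p = η ^ (p - 1) w` with `σ η = η`, so `w / η ∈ 𝔽_p` is fixed by `σ`, forcing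
`w = 0` as `p` is odd. Once `L x = L y`, `Φ x - Φ y = (1 - c) (x - y)`.
-/

section

variable {F : Type*} [Field F] {p m : ℕ}

theorem pow_pow_eq_self_of_pow_eq_self {M : Type*} [Monoid M] {r : M} (h : r ^ p = r) (k : ℕ) :
    r ^ p ^ k = r := by
  simpa [pow_iterate] using Function.iterate_fixed (f := fun x : M => x ^ p) h k

theorem eq_zero_of_pow_eq_pow_pred_mul (hp : 2 ≤ p) (h2 : (2 : F) ≠ 0) {η w : F}
    (hη : η ^ p ^ m = η) (hw : w ^ p ^ m = -w) (h : w ^ p = η ^ (p - 1) * w) : w = 0 := by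
  rcases eq_or_ne η 0 with rfl | hη0
  · rw [zero_pow (by omega), zero_mul] at h
    exact (pow_eq_zero_iff (by omega)).mp h
  have hfix : (w / η) ^ p = w / η := by
    rw [div_pow, h, ← Nat.sub_add_cancel (by omega : 1 ≤ p), pow_succ, Nat.add_sub_cancel]
    field_simp
  have hneg : -w = w := by
    have := pow_pow_eq_self_of_pow_eq_self hfix m
    rwa [div_pow, hη, hw, div_left_inj' hη0] at this
  exact (mul_eq_zero.mp (by linear_combination -hneg : (2 : F) * w = 0)).resolve_left h2

def linearized (p : ℕ) [Fact p.Prime] [CharP F p] (T : F) : F →+ F :=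
  AddMonoidHom.mk' (fun w => T * w ^ p - T ^ p * w + w) fun u v => by
    simp only [add_pow_char]
    ring

theorem linearized_apply [Fact p.Prime] [CharP F p] (T w : F) :
    linearized p T w = T * w ^ p - T ^ p * w + w :=
  rfl

theorem eq_zero_of_linearized_eq_zero [Fact p.Prime] [CharP F p] (h2 : (2 : F) ≠ 0) {T w : F}
    (hT : T = 0 ∨ (T ≠ 0 ∧ ∃ γ : F, γ ^ p ^ m = γ ∧ (T - 1) / T = γ ^ (p - 1)))
    (hTq : T ^ p ^ m = T) (hw : w ^ p ^ m = -w) (h : linearized p T w = 0) : w = 0 := by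
  have hp := (Fact.out : p.Prime).two_le
  rw [linearized_apply] at h
  rcases hT with rfl | ⟨hT0, γ, hγ, hTγ⟩
  · simpa [zero_pow (by omega : p ≠ 0)] using h
  -- `T ^ p - 1 = (T - 1) ^ p = γ ^ ((p - 1) p) T ^ p`, so `w ^ p = (T γ ^ p) ^ (p - 1) w`.
  refine eq_zero_of_pow_eq_pow_pred_mul hp h2 (η := T * γ ^ p) ?_ hw ?_
  · rw [mul_pow, hTq, pow_right_comm, hγ]
  have hT1 : T - 1 = γ ^ (p - 1) * T := by rw [← hTγ, div_mul_cancel₀ _ hT0]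
  have hTp : T ^ p - 1 = (γ ^ (p - 1)) ^ p * T ^ p := by
    rw [← one_pow p, ← sub_pow_char, hT1, mul_pow]
  have hpow : T ^ p = T * T ^ (p - 1) := by rw [← pow_succ', Nat.sub_add_cancel (by omega)]
  apply mul_left_cancel₀ hT0
  calc T * w ^ p = (T ^ p - 1) * w := by linear_combination h
    _ = T * ((T * γ ^ p) ^ (p - 1) * w) := by
      rw [hTp, hpow, mul_pow, ← pow_mul, ← pow_mul, mul_comm p (p - 1)]
      ring

def artinSchreierShift (p m : ℕ) (δ x : F) : F := x ^ p ^ m - x + δ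

def pcnMap (p m : ℕ) (δ x : F) : F := artinSchreierShift p m δ x ^ (p ^ (m + 1) + 1) + x

section Involution

variable [Fact p.Prime] [CharP F p] (hinv : ∀ x : F, (x ^ p ^ m) ^ p ^ m = x)
include hinv

theorem add_pow_pow_eq_self (δ : F) : (δ + δ ^ p ^ m) ^ p ^ m = δ + δ ^ p ^ m := by
  rw [add_pow_char_pow, hinv, add_comm]

theorem artinSchreierShift_pow (δ x : F) :
    artinSchreierShift p m δ x ^ p ^ m = δ + δ ^ p ^ m - artinSchreierShift p m δ x := by
  simp only [artinSchreierShift, add_pow_char_pow, sub_pow_char_pow, hinv]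
  ring

theorem pow_pow_succ_add_one_pow_sub_self {T u : F} (hu : u ^ p ^ m = T - u) :
    (u ^ (p ^ (m + 1) + 1)) ^ p ^ m - u ^ (p ^ (m + 1) + 1) = T * u ^ p - T ^ p * u := by
  rw [pow_succ, pow_succ, pow_mul, mul_pow, pow_right_comm, hinv, hu, sub_pow_char]
  ring

theorem pcnMap_pow_sub_self (δ x : F) :
    pcnMap p m δ x ^ p ^ m - pcnMap p m δ x =
      linearized p (δ + δ ^ p ^ m) (artinSchreierShift p m δ x) - δ := by
  have hL : artinSchreierShift p m δ x = x ^ p ^ m - x + δ := rfl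
  rw [pcnMap, add_pow_char_pow, linearized_apply]
  linear_combination pow_pow_succ_add_one_pow_sub_self hinv (artinSchreierShift_pow hinv δ x) - hL

end Involution

theorem artinSchreierShift_add [Fact p.Prime] [CharP F p] (δ x a : F) :
    artinSchreierShift p m δ (x + a) = artinSchreierShift p m δ x + (a ^ p ^ m - a) := by
  simp only [artinSchreierShift, add_pow_char_pow]
  ring

theorem pcnMap_sub_pcnMap {δ x y : F}
    (h : artinSchreierShift p m δ x = artinSchreierShift p m δ y) :
    pcnMap p m δ x - pcnMap p m δ y = x - y := by
  rw [pcnMap, pcnMap, h]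
  ring

theorem pcnMap_derivative_injective [Fact p.Prime] [CharP F p]
    (hinv : ∀ x : F, (x ^ p ^ m) ^ p ^ m = x) (h2 : (2 : F) ≠ 0) {δ c : F}
    (hδ : δ + δ ^ p ^ m = 0 ∨ (δ + δ ^ p ^ m ≠ 0 ∧ ∃ γ : F, γ ^ p ^ m = γ ∧
      (δ + δ ^ p ^ m - 1) / (δ + δ ^ p ^ m) = γ ^ (p - 1)))
    (hc : c ^ p ^ m = c) (hc1 : c ≠ 1) (a : F) :
    Function.Injective fun x => pcnMap p m δ (x + a) - c * pcnMap p m δ x := by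
  set Φ := fun x => pcnMap p m δ (x + a) - c * pcnMap p m δ x
  set L := artinSchreierShift p m δ
  set Λ := linearized p (δ + δ ^ p ^ m)
  have h1c : 1 - c ≠ 0 := sub_ne_zero.2 hc1.symm
  have hconj : ∀ x, Φ x ^ p ^ m - Φ x = (1 - c) * Λ (L x) + (Λ (a ^ p ^ m - a) - (1 - c) * δ) := by
    intro x
    have hxa := pcnMap_pow_sub_self hinv δ (x + a)
    rw [artinSchreierShift_add, map_add] at hxa
    rw [sub_pow_char_pow, mul_pow, hc]
    linear_combination hxa - c * pcnMap_pow_sub_self hinv δ x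
  intro x y hxy
  have hL : L x = L y := by
    rw [← sub_eq_zero]
    refine eq_zero_of_linearized_eq_zero h2 hδ (add_pow_pow_eq_self hinv δ) ?_ ?_
    · rw [sub_pow_char_pow, artinSchreierShift_pow hinv, artinSchreierShift_pow hinv]
      ring
    · apply mul_left_cancel₀ h1c
      have hy := hconj y
      rw [← hxy] at hy
      rw [map_sub]
      linear_combination hy - hconj x
  have hx := pcnMap_sub_pcnMap hL
  have hLa : L (x + a) = L (y + a) := by
    simp only [L, artinSchreierShift_add] at hL ⊢
    rw [hL]
  have hxa := pcnMap_sub_pcnMap hLa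
  have hdiff : (1 - c) * (x - y) = 0 := by linear_combination hxy - hxa + c * hx
  exact sub_eq_zero.1 ((mul_eq_zero.1 hdiff).resolve_left h1c)

end

theorem stmt_17_general (p m : ℕ) (hp : p.Prime) (hodd : Odd p)
    (F : Type*) [Field F] [Fintype F] (hF : Fintype.card F = p ^ (2 * m)) (δ c : F)
    (hδ : δ + δ ^ (p ^ m) = 0 ∨
      (δ + δ ^ (p ^ m) ≠ 0 ∧ ∃ γ : F, γ ^ (p ^ m) = γ ∧
        (δ + δ ^ (p ^ m) - 1) / (δ + δ ^ (p ^ m)) = γ ^ (p - 1)))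
    (hc : c ^ (p ^ m) = c) (hc1 : c ≠ 1)
    (G : F → F)
    (hG : ∀ x, G x = (x ^ (p ^ m) - x + δ) ^ (p ^ (m + 1) + 1) + x) :
    ∀ a b : F, ∃! x : F, G (x + a) - c * G x = b := by
  have : Fact p.Prime := ⟨hp⟩
  have : CharP F p := charP_of_card_eq_prime_pow hF
  have h2 : (2 : F) ≠ 0 := Ring.two_ne_zero <| by
    rw [ringChar.eq F p]
    rintro rfl
    exact absurd hodd (by decide)
  have hinv : ∀ x : F, (x ^ p ^ m) ^ p ^ m = x := fun x => by
    rw [← pow_mul, ← pow_add, ← two_mul, ← hF, FiniteField.pow_card]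
  obtain rfl : G = pcnMap p m δ := funext hG
  exact fun a => (Finite.injective_iff_bijective.mp
    (pcnMap_derivative_injective hinv h2 hδ hc hc1 a)).existsUnique

theorem stmt_17 (p m : ℕ) (hp : p.Prime) (hodd : Odd p) (hm : 0 < m)
    (F : Type*) [Field F] [Fintype F] (hF : Fintype.card F = p ^ (2 * m)) (δ c : F)
    (hδ : δ + δ ^ (p ^ m) = 0 ∨
      (δ + δ ^ (p ^ m) ≠ 0 ∧ ∃ γ : F, γ ^ (p ^ m) = γ ∧
        (δ + δ ^ (p ^ m) - 1) / (δ + δ ^ (p ^ m)) = γ ^ (p - 1)))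
    (hc : c ^ (p ^ m) = c) (hc1 : c ≠ 1)
    (G : F → F)
    (hG : ∀ x, G x = (x ^ (p ^ m) - x + δ) ^ (p ^ (m + 1) + 1) + x) :
    ∀ a b : F, ∃! x : F, G (x + a) - c * G x = b :=
  stmt_17_general p m hp hodd F hF δ c hδ hc hc1 G hG
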